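/- arXiv:2602.21879 — 7 statements merged into one kernel-verified Lean document; each statement's English description precedes it below -/
import Mathlib

section
/- Let τ and σ be positive semidefinite n×n complex matrices with t := Tr τ > 0 and s := Tr σ > 0, and let O be a Hermitian n×n complex matrix. Then |Tr(O*τ)/t − Tr(O*σ)/s| ≤ (2·‖O‖ / min(t, s)) · ‖τ − σ‖₁. -/
/-! For Hermitian `A` with eigenvalues `λᵢ` and orthonormal eigenvectors `uᵢ`, the identity
`√(A²) = |A|` gives `‖A‖₁ = ∑ |λᵢ|`, and `Tr (O A) = ∑ λᵢ ⟪uᵢ, O uᵢ⟫` with `|⟪uᵢ, O uᵢ⟫| ≤ ‖O‖`;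
hence `|Tr (O A)| ≤ ‖O‖ ‖A‖₁` and `|Tr A| ≤ ‖A‖₁`. Writing `a = Tr (O τ)`, `b = Tr (O σ)`,
`a / t - b / s = (a - b) / t + (b / s) (s - t) / t`, and both terms are bounded by
`‖O‖ ‖τ - σ‖₁ / t`, the second because `|b| ≤ ‖O‖ s`. -/

open scoped Matrix.Norms.L2Operator ComplexOrder
open Matrix

/-- The trace norm of a complex square matrix: the trace of the positive semidefinite
square root of `Aᴴ * A` (a nonnegative real number). -/
noncomputable def traceNorm {n : Type*} [Fintype n] [DecidableEq n]
    (A : Matrix n n ℂ) : ℝ :=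
  (((Matrix.posSemidef_conjTranspose_mul_self A).1.eigenvectorUnitary : Matrix n n ℂ) *
    Matrix.diagonal (((↑) : ℝ → ℂ) ∘ (Real.sqrt ·) ∘ (Matrix.posSemidef_conjTranspose_mul_self A).1.eigenvalues) *
    (star (Matrix.posSemidef_conjTranspose_mul_self A).1.eigenvectorUnitary : Matrix n n ℂ)).trace.re

namespace Matrix

variable {m n 𝕜 : Type*} [Fintype m] [Fintype n] [RCLike 𝕜]

lemma norm_entry_le_l2_opNorm [DecidableEq n] (M : Matrix m n 𝕜) (i : m) (j : n) :
    ‖M i j‖ ≤ ‖M‖ := by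
  have h := M.l2_opNorm_mulVec (PiLp.single 2 j (1 : 𝕜))
  rw [PiLp.norm_single, norm_one, mul_one] at h
  refine le_trans (le_of_eq ?_) ((PiLp.norm_apply_le _ i).trans h)
  simp

lemma norm_diag_star_mul_mul_le [DecidableEq n] (O : Matrix n n 𝕜) {U : Matrix n n 𝕜}
    (hU : U ∈ unitary (Matrix n n 𝕜)) (i : n) : ‖(star U * O * U) i i‖ ≤ ‖O‖ := by
  refine (norm_entry_le_l2_opNorm _ i i).trans_eq ?_
  rw [CStarRing.norm_mul_mem_unitary _ hU, CStarRing.norm_mem_unitary_mul _ (Unitary.star_mem hU)]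

end Matrix

lemma traceNorm_eq_re_trace_cfc_sqrt {n : Type*} [Fintype n] [DecidableEq n] (A : Matrix n n ℂ) :
    traceNorm A = (cfc Real.sqrt (Aᴴ * A)).trace.re := by
  rw [(posSemidef_conjTranspose_mul_self A).1.cfc_eq, IsHermitian.cfc,
    Unitary.conjStarAlgAut_apply]
  rfl

namespace Matrix.IsHermitian

variable {n : Type*} [Fintype n] [DecidableEq n] {A : Matrix n n ℂ}

open Unitary in
lemma trace_cfc (hA : A.IsHermitian) (f : ℝ → ℝ) :
    (cfc f A).trace = ∑ i, (f (hA.eigenvalues i) : ℂ) := by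
  rw [hA.cfc_eq, IsHermitian.cfc, conjStarAlgAut_apply, trace_mul_cycle, coe_star_mul_self,
    one_mul, trace_diagonal]
  rfl

open Unitary in
lemma trace_mul_eq_sum (O : Matrix n n ℂ) (hA : A.IsHermitian) :
    (O * A).trace = ∑ i, (star (hA.eigenvectorUnitary : Matrix n n ℂ) * O *
      hA.eigenvectorUnitary) i i * hA.eigenvalues i := by
  conv_lhs => rw [hA.spectral_theorem, conjStarAlgAut_apply, ← mul_assoc, ← mul_assoc,
    trace_mul_cycle, ← mul_assoc]
  simp [trace, mul_diagonal]

lemma traceNorm_eq_sum_abs_eigenvalues (hA : A.IsHermitian) :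
    traceNorm A = ∑ i, |hA.eigenvalues i| := by
  have hsq : cfc Real.sqrt (Aᴴ * A) = cfc (fun x : ℝ ↦ |x|) A := by
    rw [hA.eq, ← pow_two, ← cfc_comp_pow Real.sqrt 2 A (ha := hA.isSelfAdjoint)]
    simp only [Real.sqrt_sq_eq_abs]
  rw [traceNorm_eq_re_trace_cfc_sqrt, hsq, hA.trace_cfc, Complex.re_sum]
  simp only [Complex.ofReal_re]

lemma abs_re_trace_le_traceNorm (hA : A.IsHermitian) : |A.trace.re| ≤ traceNorm A := by
  rw [hA.trace_eq_sum_eigenvalues, Complex.re_sum, hA.traceNorm_eq_sum_abs_eigenvalues]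
  simp only [Complex.coe_algebraMap, Complex.ofReal_re]
  exact Finset.abs_sum_le_sum_abs _ _

lemma abs_re_trace_mul_le (O : Matrix n n ℂ) (hA : A.IsHermitian) :
    |(O * A).trace.re| ≤ ‖O‖ * traceNorm A := by
  calc |(O * A).trace.re| ≤ ‖(O * A).trace‖ := Complex.abs_re_le_norm _
    _ ≤ ∑ i, ‖(star (hA.eigenvectorUnitary : Matrix n n ℂ) * O * hA.eigenvectorUnitary) i i‖ *
          |hA.eigenvalues i| := by
      rw [hA.trace_mul_eq_sum]
      refine (norm_sum_le _ _).trans_eq ?_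
      simp only [norm_mul, Complex.norm_real, Real.norm_eq_abs]
    _ ≤ ∑ i, ‖O‖ * |hA.eigenvalues i| := by
      gcongr with i
      exact norm_diag_star_mul_mul_le O hA.eigenvectorUnitary.2 i
    _ = ‖O‖ * traceNorm A := by rw [← Finset.mul_sum, hA.traceNorm_eq_sum_abs_eigenvalues]

end Matrix.IsHermitian

lemma Matrix.PosSemidef.traceNorm_eq_re_trace {n : Type*} [Fintype n] [DecidableEq n]
    {A : Matrix n n ℂ} (hA : A.PosSemidef) : traceNorm A = A.trace.re := by
  rw [hA.1.traceNorm_eq_sum_abs_eigenvalues, hA.1.trace_eq_sum_eigenvalues, Complex.re_sum]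
  exact Finset.sum_congr rfl fun i _ ↦ abs_of_nonneg (hA.eigenvalues_nonneg i)

lemma abs_div_sub_div_le_of_abs_sub_le {a b t s N X : ℝ} (ht : 0 < t) (hs : 0 < s)
    (hab : |a - b| ≤ N * X) (hb : |b| ≤ N * s) (hst : |s - t| ≤ X) :
    |a / t - b / s| ≤ 2 * N / min t s * X := by
  have hN : 0 ≤ N := nonneg_of_mul_nonneg_left ((abs_nonneg b).trans hb) hs
  have hX : 0 ≤ X := (abs_nonneg _).trans hst
  have hsplit : a / t - b / s = (a - b) / t + b / s * (s - t) / t := by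
    field_simp
    ring
  calc |a / t - b / s| ≤ |a - b| / t + |b| / s * |s - t| / t := by
        rw [hsplit]
        refine (abs_add_le _ _).trans_eq ?_
        simp only [abs_div, abs_mul, abs_of_pos ht, abs_of_pos hs]
    _ ≤ N * X / t + N * s / s * X / t := by gcongr
    _ = 2 * N / t * X := by field_simp; ring
    _ ≤ 2 * N / min t s * X := by gcongr; exact min_le_left t s

theorem normalized_expectation_stability_general {n : Type*} [Fintype n] [DecidableEq n]
    (τ σ O : Matrix n n ℂ) (hτ : τ.PosSemidef) (hσ : σ.PosSemidef)
    (ht : 0 < τ.trace.re) (hs : 0 < σ.trace.re) :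
    |(O * τ).trace.re / τ.trace.re - (O * σ).trace.re / σ.trace.re| ≤
      (2 * ‖O‖ / min τ.trace.re σ.trace.re) * traceNorm (τ - σ) := by
  have hdiff : (τ - σ).IsHermitian := hτ.1.sub hσ.1
  refine abs_div_sub_div_le_of_abs_sub_le ht hs ?_ ?_ ?_
  · rw [← Complex.sub_re, ← trace_sub, ← Matrix.mul_sub]
    exact hdiff.abs_re_trace_mul_le O
  · simpa only [hσ.traceNorm_eq_re_trace] using hσ.1.abs_re_trace_mul_le O
  · rw [abs_sub_comm, ← Complex.sub_re, ← trace_sub]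
    exact hdiff.abs_re_trace_le_traceNorm

/-- Stability bound for normalized expectation values (Lemma SM lem:normalized_stability):
`|Tr(Oτ)/t − Tr(Oσ)/s| ≤ (2‖O‖ / min(t,s)) ‖τ − σ‖₁`. -/
theorem normalized_expectation_stability {n : Type*} [Fintype n] [DecidableEq n] [Nonempty n]
    (τ σ O : Matrix n n ℂ) (hτ : τ.PosSemidef) (hσ : σ.PosSemidef) (hO : O.IsHermitian)
    (ht : 0 < τ.trace.re) (hs : 0 < σ.trace.re) :
    |(O * τ).trace.re / τ.trace.re - (O * σ).trace.re / σ.trace.re| ≤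
      (2 * ‖O‖ / min τ.trace.re σ.trace.re) * traceNorm (τ - σ) :=
  normalized_expectation_stability_general τ σ O hτ hσ ht hs
end

section
/- Let H_Re and H_{I,1},…,H_{I,m} be Hermitian n×n complex matrices, let Δt ∈ ℝ, and let ξ₁,…,ξ_m ∈ ℝ. Set K := ∑_{ℓ=1}^{m} ξ_ℓ • H_{I,ℓ}. Then ‖exp((−i·Δt)•H_Re) * exp((−i)•K) − exp((−i)•(Δt•H_Re + K))‖ ≤ (|Δt|/2)·‖[H_Re, K]‖ ≤ (|Δt|/2)·∑_{ℓ=1}^{m} |ξ_ℓ|·‖[H_Re, H_{I,ℓ}]‖. -/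
/-!
With `a = -i Δt H_Re` and `b = -i K` skew-adjoint, all exponentials below are unitary. Along
`h u = exp ((1 - u) (a + b)) exp (u a) exp (u b)` the derivative is
`exp ((1 - u) (a + b)) [exp (u a), b] exp (u b)`, and `‖[exp (u a), b]‖ ≤ u ‖[a, b]‖` because
`u ↦ exp (u a) b exp (-u a)` has derivative of constant norm `‖[a, b]‖`. Integrating over `[0, 1]`
gives `‖exp a exp b - exp (a + b)‖ ≤ ‖[a, b]‖ / 2`. The second inequality is the triangle
inequality, the commutator being linear in `K`.
-/

open NormedSpace

section CStarAlgebra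

variable {A : Type*} [CStarAlgebra A]

-- Mathlib's lemmas on `exp` assume a normed `ℚ`-algebra, which is not an instance for C⋆-algebras.
noncomputable local instance : NormedAlgebra ℚ A := .restrictScalars ℚ ℂ A

theorem norm_exp_mul_of_mem_skewAdjoint {a : A} (ha : a ∈ skewAdjoint A) (b : A) :
    ‖exp a * b‖ = ‖b‖ :=
  CStarRing.norm_mem_unitary_mul b (exp_mem_unitary_of_mem_skewAdjoint ha)

theorem norm_mul_exp_of_mem_skewAdjoint {a : A} (ha : a ∈ skewAdjoint A) (b : A) :
    ‖b * exp a‖ = ‖b‖ :=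
  CStarRing.norm_mul_mem_unitary b (exp_mem_unitary_of_mem_skewAdjoint ha)

theorem hasDerivAt_exp_smul_mul_mul_exp_neg_smul (a b : A) (t : ℝ) :
    HasDerivAt (fun u : ℝ => exp (u • a) * b * exp ((-u) • a))
      (exp (t • a) * (a * b - b * a) * exp ((-t) • a)) t := by
  have hexp := (hasDerivAt_exp_smul_const a t).mul_const b
  have hexp_neg : HasDerivAt (fun u : ℝ => exp ((-u) • a)) (-(exp ((-t) • a) * a)) t := by
    simpa [Function.comp_def] using (hasDerivAt_exp_smul_const a (-t)).scomp t (hasDerivAt_neg t)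
  refine (hexp.mul hexp_neg).congr_deriv ?_
  have hcomm : exp ((-t) • a) * a = a * exp ((-t) • a) :=
    ((Commute.refl a).smul_left (-t)).exp_left.eq
  rw [hcomm]
  noncomm_ring

theorem norm_exp_smul_mul_sub_mul_exp_smul_le {a : A} (ha : a ∈ skewAdjoint A) (b : A) {s : ℝ}
    (hs : 0 ≤ s) : ‖exp (s • a) * b - b * exp (s • a)‖ ≤ s * ‖a * b - b * a‖ := by
  set g : ℝ → A := fun u => exp (u • a) * b * exp ((-u) • a)
  have hmem (u : ℝ) : u • a ∈ skewAdjoint A := skewAdjoint.smul_mem u ha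
  have hg : ‖g s - g 0‖ ≤ ‖a * b - b * a‖ * ‖s - 0‖ :=
    convex_univ.norm_image_sub_le_of_norm_hasDerivWithin_le
      (fun u _ => (hasDerivAt_exp_smul_mul_mul_exp_neg_smul a b u).hasDerivWithinAt)
      (fun u _ => by
        rw [norm_mul_exp_of_mem_skewAdjoint (hmem (-u)),
          norm_exp_mul_of_mem_skewAdjoint (hmem u)])
      (Set.mem_univ 0) (Set.mem_univ s)
  have hconj : exp (s • a) * b - b * exp (s • a) = (g s - g 0) * exp (s • a) := by
    simp only [g, sub_mul, mul_assoc, zero_smul, neg_zero, exp_zero, mul_one, one_mul]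
    rw [← exp_add_of_commute (((Commute.refl a).smul_left (-s)).smul_right s), ← add_smul,
      neg_add_cancel, zero_smul, exp_zero, mul_one]
  rw [hconj, norm_mul_exp_of_mem_skewAdjoint (hmem s)]
  simpa only [sub_zero, Real.norm_of_nonneg hs, mul_comm] using hg

theorem hasDerivAt_exp_one_sub_smul_add_mul_exp_smul_mul_exp_smul (a b : A) (t : ℝ) :
    HasDerivAt (fun u : ℝ => exp ((1 - u) • (a + b)) * (exp (u • a) * exp (u • b)))
      (exp ((1 - t) • (a + b)) * ((exp (t • a) * b - b * exp (t • a)) * exp (t • b))) t := by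
  have hexp_sum : HasDerivAt (fun u : ℝ => exp ((1 - u) • (a + b)))
      (-(exp ((1 - t) • (a + b)) * (a + b))) t := by
    simpa [Function.comp_def] using
      (hasDerivAt_exp_smul_const (a + b) (1 - t)).scomp t ((hasDerivAt_id t).const_sub 1)
  have hexp_prod := (hasDerivAt_exp_smul_const a t).mul (hasDerivAt_exp_smul_const b t)
  refine (hexp_sum.mul hexp_prod).congr_deriv ?_
  have hcomm_a : exp (t • a) * a = a * exp (t • a) := ((Commute.refl a).smul_left t).exp_left.eq
  have hcomm_b : exp (t • b) * b = b * exp (t • b) := ((Commute.refl b).smul_left t).exp_left.eq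
  simp only [Pi.mul_apply]
  rw [hcomm_a, hcomm_b]
  noncomm_ring

theorem norm_exp_mul_exp_sub_exp_add_le {a b : A} (ha : a ∈ skewAdjoint A)
    (hb : b ∈ skewAdjoint A) : ‖exp a * exp b - exp (a + b)‖ ≤ ‖a * b - b * a‖ / 2 := by
  set C := ‖a * b - b * a‖
  set h : ℝ → A := fun u => exp ((1 - u) • (a + b)) * (exp (u • a) * exp (u • b))
  have hderiv (t : ℝ) := hasDerivAt_exp_one_sub_smul_add_mul_exp_smul_mul_exp_smul a b t
  have hbound : ‖h 1 - h 0‖ ≤ C * 1 ^ 2 / 2 := by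
    refine image_norm_le_of_norm_deriv_right_le_deriv_boundary (f := fun u => h u - h 0)
      (B := fun u => C * u ^ 2 / 2) (B' := fun u => C * u)
      (fun u _ => ((hderiv u).sub_const (h 0)).continuousAt.continuousWithinAt)
      (fun u _ => ((hderiv u).sub_const (h 0)).hasDerivWithinAt) (by simp) (fun u => ?_)
      (fun u hu => ?_) (Set.right_mem_Icc.2 zero_le_one)
    · exact (((hasDerivAt_pow 2 u).const_mul C).div_const 2).congr_deriv (by ring)
    · rw [norm_exp_mul_of_mem_skewAdjoint (skewAdjoint.smul_mem _ (add_mem ha hb)),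
        norm_mul_exp_of_mem_skewAdjoint (skewAdjoint.smul_mem u hb), mul_comm]
      exact norm_exp_smul_mul_sub_mul_exp_smul_le ha b hu.1
  simpa [h] using hbound

theorem norm_exp_neg_I_smul_mul_exp_neg_I_smul_sub_le {H K : A} (hH : IsSelfAdjoint H)
    (hK : IsSelfAdjoint K) :
    ‖exp ((-Complex.I) • H) * exp ((-Complex.I) • K) - exp ((-Complex.I) • (H + K))‖ ≤
      ‖H * K - K * H‖ / 2 := by
  have hI : -Complex.I ∈ skewAdjoint ℂ := by simp [skewAdjoint.mem_iff]
  have hcomm : (-Complex.I) • H * (-Complex.I) • K - (-Complex.I) • K * (-Complex.I) • H =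
      -(H * K - K * H) := by
    simp only [smul_mul_smul_comm, neg_mul_neg, Complex.I_mul_I, neg_one_smul, neg_sub]
    abel
  rw [smul_add, ← norm_neg (H * K - K * H), ← hcomm]
  exact norm_exp_mul_exp_sub_exp_add_le (hH.smul_mem_skewAdjoint hI) (hK.smul_mem_skewAdjoint hI)

end CStarAlgebra

theorem norm_mul_sum_smul_sub_sum_smul_mul_le {ι 𝕜 E : Type*} [NormedField 𝕜] [NormedRing E]
    [NormedAlgebra 𝕜 E] (h : E) (s : Finset ι) (c : ι → 𝕜) (x : ι → E) :
    ‖h * ∑ i ∈ s, c i • x i - (∑ i ∈ s, c i • x i) * h‖ ≤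
      ∑ i ∈ s, ‖c i‖ * ‖h * x i - x i * h‖ := by
  have hsum : h * ∑ i ∈ s, c i • x i - (∑ i ∈ s, c i • x i) * h =
      ∑ i ∈ s, c i • (h * x i - x i * h) := by
    simp only [Finset.mul_sum, Finset.sum_mul, ← Finset.sum_sub_distrib, mul_smul_comm,
      smul_mul_assoc, smul_sub]
  rw [hsum]
  exact (norm_sum_le _ _).trans (Finset.sum_le_sum fun i _ => norm_smul_le _ _)

open scoped Matrix.Norms.L2Operator

theorem lie_trotter_onestep_bound_general {n : Type*} [Fintype n] [DecidableEq n]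
    (m : ℕ) (HRe : Matrix n n ℂ) (HI : Fin m → Matrix n n ℂ)
    (hRe : HRe.IsHermitian) (hI : ∀ ℓ, (HI ℓ).IsHermitian)
    (Δt : ℝ) (ξ : Fin m → ℝ)
    (K : Matrix n n ℂ) (hK : K = ∑ ℓ, ξ ℓ • HI ℓ) :
    ‖NormedSpace.exp (((-Complex.I) * (Δt : ℂ)) • HRe) *
        NormedSpace.exp ((-Complex.I) • K) -
        NormedSpace.exp ((-Complex.I) • (Δt • HRe + K))‖ ≤
      |Δt| / 2 * ‖HRe * K - K * HRe‖ ∧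
    |Δt| / 2 * ‖HRe * K - K * HRe‖ ≤
      |Δt| / 2 * ∑ ℓ, |ξ ℓ| * ‖HRe * HI ℓ - HI ℓ * HRe‖ := by
  have hKsa : IsSelfAdjoint K :=
    hK ▸ isSelfAdjoint_sum _ fun ℓ _ => (IsSelfAdjoint.all (ξ ℓ)).smul (hI ℓ).isSelfAdjoint
  have hsmul : ((-Complex.I) * (Δt : ℂ)) • HRe = (-Complex.I) • (Δt • HRe) := by
    rw [mul_smul, Complex.coe_smul]
  have hcomm : ‖(Δt • HRe) * K - K * (Δt • HRe)‖ = |Δt| * ‖HRe * K - K * HRe‖ := by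
    rw [smul_mul_assoc, mul_smul_comm, ← smul_sub, norm_smul, Real.norm_eq_abs]
  refine ⟨?_, mul_le_mul_of_nonneg_left ?_ (by positivity)⟩
  · have htrotter := norm_exp_neg_I_smul_mul_exp_neg_I_smul_sub_le
      ((IsSelfAdjoint.all Δt).smul hRe.isSelfAdjoint) hKsa
    rw [← hsmul, hcomm] at htrotter
    linarith
  · simpa only [hK, Real.norm_eq_abs] using norm_mul_sum_smul_sub_sum_smul_mul_le HRe _ ξ HI

/-- One-step Lie–Trotter bound for the splitting of the coherent and stochastic-noise
generators (Lemma SM lem:LT_HrHi), stated as the chain of the two inequalities. -/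
theorem lie_trotter_onestep_bound {n : Type*} [Fintype n] [DecidableEq n] [Nonempty n]
    (m : ℕ) (HRe : Matrix n n ℂ) (HI : Fin m → Matrix n n ℂ)
    (hRe : HRe.IsHermitian) (hI : ∀ ℓ, (HI ℓ).IsHermitian)
    (Δt : ℝ) (ξ : Fin m → ℝ)
    (K : Matrix n n ℂ) (hK : K = ∑ ℓ, ξ ℓ • HI ℓ) :
    ‖NormedSpace.exp (((-Complex.I) * (Δt : ℂ)) • HRe) *
        NormedSpace.exp ((-Complex.I) • K) -
        NormedSpace.exp ((-Complex.I) • (Δt • HRe + K))‖ ≤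
      |Δt| / 2 * ‖HRe * K - K * HRe‖ ∧
    |Δt| / 2 * ‖HRe * K - K * HRe‖ ≤
      |Δt| / 2 * ∑ ℓ, |ξ ℓ| * ‖HRe * HI ℓ - HI ℓ * HRe‖ :=
  lie_trotter_onestep_bound_general m HRe HI hRe hI Δt ξ K hK
end

section
/- Let A and B be Hermitian n×n complex matrices. Then the Strang (second-order Suzuki–Trotter) splitting satisfies ‖exp((−i/2)•A) * exp((−i)•B) * exp((−i/2)•A) − exp((−i)•(A + B))‖ ≤ (1/12)·‖[B, [B, A]]‖ + (1/24)·‖[A, [A, B]]‖. -/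
/-!
Put `V = (-i/2) • A`, `Y = (-i) • B` and `W t = exp (t V) exp (t Y) exp (t V)`. Then
`W' = (2V + Y) W + R`, where `R t = e^{tV} D(t) e^{tY} e^{tV}` and
`D(t) = (e^{tY} V e^{-tY} - V) - (e^{-tV} Y e^{tV} - Y)`. The first-order terms of the two
conjugations cancel, so the second-order Taylor bound for conjugation by a contraction group gives
`‖R t‖ ≤ (‖[V,[V,Y]]‖ + ‖[Y,[Y,V]]‖) t² / 2`. Variation of constants, with all exponentials
unitary, bounds `‖W 1 - exp (2V + Y)‖` by the integral of this over `[0, 1]`, which is a sixth of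
the bracket; rescaling to `A` and `B` gives the constants `1/24` and `1/12`.
-/

open scoped Matrix.Norms.L2Operator
open Matrix NormedSpace Set

theorem norm_sub_le_of_norm_deriv_le_pow {E : Type*} [NormedAddCommGroup E] [NormedSpace ℝ E]
    {f f' : ℝ → E} {C T : ℝ} (k : ℕ) (hT : 0 ≤ T)
    (hf : ∀ t ∈ Icc 0 T, HasDerivAt f (f' t) t) (bound : ∀ t ∈ Icc 0 T, ‖f' t‖ ≤ C * t ^ k) :
    ‖f T - f 0‖ ≤ C * T ^ (k + 1) / (k + 1) := by
  have hB (t : ℝ) : HasDerivAt (fun t => C * t ^ (k + 1) / (k + 1)) (C * t ^ k) t := by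
    refine (((hasDerivAt_pow (k + 1) t).const_mul C).div_const ((k : ℝ) + 1)).congr_deriv ?_
    rw [Nat.add_sub_cancel]
    push_cast
    field_simp
  exact image_norm_le_of_norm_deriv_right_le_deriv_boundary (f := fun t => f t - f 0)
    (fun t ht => ((hf t ht).continuousAt.sub continuousAt_const).continuousWithinAt)
    (fun t ht => ((hf t (Ico_subset_Icc_self ht)).sub_const (f 0)).hasDerivWithinAt)
    (by simp) hB (fun t ht => bound t (Ico_subset_Icc_self ht)) ⟨hT, le_rfl⟩

theorem norm_mul_mul_le_of_norm_le_one {𝔸 : Type*} [NormedRing 𝔸] {a b : 𝔸} (m : 𝔸)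
    (ha : ‖a‖ ≤ 1) (hb : ‖b‖ ≤ 1) : ‖a * m * b‖ ≤ ‖m‖ :=
  calc ‖a * m * b‖ ≤ ‖a‖ * ‖m‖ * ‖b‖ := norm_mul₃_le
    _ ≤ 1 * ‖m‖ * 1 := by gcongr
    _ = ‖m‖ := by ring

theorem smul_lie_smul_lie_smul {R 𝔸 : Type*} [CommRing R] [Ring 𝔸] [Algebra R 𝔸] (a b : R)
    (x y : 𝔸) : ⁅a • x, ⁅a • x, b • y⁆⁆ = (a * a * b) • ⁅x, ⁅x, y⁆⁆ := by
  simp only [Ring.lie_def, mul_sub, sub_mul, smul_mul_assoc, mul_smul_comm, smul_sub, mul_assoc]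
  module

theorem norm_exp_smul_le_one_of_mem_skewAdjoint {𝔸 : Type*} [CStarAlgebra 𝔸] {X : 𝔸}
    (hX : X ∈ skewAdjoint 𝔸) (t : ℝ) : ‖exp (t • X)‖ ≤ 1 := by
  rcases subsingleton_or_nontrivial 𝔸 with h | h
  · simp [Subsingleton.elim (exp (t • X)) 0]
  · let +nondep : NormedAlgebra ℚ 𝔸 := .restrictScalars ℚ ℂ 𝔸
    exact (CStarRing.norm_of_mem_unitary
      (exp_mem_unitary_of_mem_skewAdjoint (skewAdjoint.smul_mem t hX))).le

section

variable {𝔸 : Type*} [NormedRing 𝔸] [NormedAlgebra ℝ 𝔸]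

theorem norm_exp_smul_neg_le_one {X : 𝔸} (hX : ∀ t : ℝ, ‖exp (t • X)‖ ≤ 1) (t : ℝ) :
    ‖exp (t • -X)‖ ≤ 1 := by
  simpa only [smul_neg, neg_smul] using hX (-t)

noncomputable def expConj (X : 𝔸) (t : ℝ) (M : 𝔸) : 𝔸 := exp (t • X) * M * exp (t • -X)

@[simp]
theorem expConj_zero (X M : 𝔸) : expConj X 0 M = M := by
  simp [expConj]

theorem norm_expConj_le {X : 𝔸} (hX : ∀ t : ℝ, ‖exp (t • X)‖ ≤ 1) (t : ℝ) (M : 𝔸) :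
    ‖expConj X t M‖ ≤ ‖M‖ :=
  norm_mul_mul_le_of_norm_le_one M (hX t) (norm_exp_smul_neg_le_one hX t)

variable [CompleteSpace 𝔸]

theorem exp_smul_mul_exp_smul_neg (X : 𝔸) (t : ℝ) : exp (t • X) * exp (t • -X) = 1 := by
  have hball (x : 𝔸) : x ∈ Metric.eball (0 : 𝔸) (expSeries ℝ 𝔸).radius := by
    simp [expSeries_radius_eq_top]
  rw [smul_neg, ← exp_add_of_commute_of_mem_ball ((Commute.refl (t • X)).neg_right)
    (hball _) (hball _), add_neg_cancel, exp_zero]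

theorem exp_smul_neg_mul_exp_smul (X : 𝔸) (t : ℝ) : exp (t • -X) * exp (t • X) = 1 := by
  simpa using exp_smul_mul_exp_smul_neg (-X) t

theorem hasDerivAt_expConj (X M : 𝔸) (t : ℝ) :
    HasDerivAt (fun u => expConj X u M) (expConj X t ⁅X, M⁆) t := by
  refine (((hasDerivAt_exp_smul_const X t).mul_const M).mul
    (hasDerivAt_exp_smul_const' (-X) t)).congr_deriv ?_
  simp only [expConj, Ring.lie_def]
  noncomm_ring

theorem norm_expConj_sub_le {X : 𝔸} (hX : ∀ t : ℝ, ‖exp (t • X)‖ ≤ 1) (M : 𝔸) {T : ℝ}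
    (hT : 0 ≤ T) : ‖expConj X T M - M‖ ≤ ‖⁅X, M⁆‖ * T := by
  simpa using norm_sub_le_of_norm_deriv_le_pow 0 hT (fun t _ => hasDerivAt_expConj X M t)
    (fun t _ => by simpa using norm_expConj_le hX t ⁅X, M⁆)

theorem norm_expConj_sub_sub_le {X : 𝔸} (hX : ∀ t : ℝ, ‖exp (t • X)‖ ≤ 1) (M : 𝔸) {T : ℝ}
    (hT : 0 ≤ T) : ‖expConj X T M - M - T • ⁅X, M⁆‖ ≤ ‖⁅X, ⁅X, M⁆⁆‖ * T ^ 2 / 2 := by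
  have h := norm_sub_le_of_norm_deriv_le_pow (f := fun t => expConj X t M - t • ⁅X, M⁆) 1 hT
    (fun t _ => (hasDerivAt_expConj X M t).sub ((hasDerivAt_id t).smul_const ⁅X, M⁆))
    (fun t ht => by simpa using norm_expConj_sub_le hX ⁅X, M⁆ ht.1)
  have e : expConj X T M - M - T • ⁅X, M⁆
      = expConj X T M - T • ⁅X, M⁆ - (expConj X 0 M - (0 : ℝ) • ⁅X, M⁆) := by
    simp [sub_right_comm]
  rw [e]
  refine h.trans_eq ?_
  norm_num

theorem norm_sub_exp_smul_mul_le {Z : 𝔸} (hZ : ∀ t : ℝ, ‖exp (t • Z)‖ ≤ 1) {W R : ℝ → 𝔸}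
    {C T : ℝ} (k : ℕ) (hT : 0 ≤ T) (hW : ∀ t ∈ Icc 0 T, HasDerivAt W (Z * W t + R t) t)
    (hR : ∀ t ∈ Icc 0 T, ‖R t‖ ≤ C * t ^ k) :
    ‖W T - exp (T • Z) * W 0‖ ≤ C * T ^ (k + 1) / (k + 1) := by
  have hG : ∀ t ∈ Icc 0 T,
      HasDerivAt (fun u => exp (u • -Z) * W u) (exp (t • -Z) * R t) t := fun t ht =>
    ((hasDerivAt_exp_smul_const (-Z) t).mul (hW t ht)).congr_deriv (by noncomm_ring)
  have hG' : ∀ t ∈ Icc 0 T, ‖exp (t • -Z) * R t‖ ≤ C * t ^ k := fun t ht =>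
    ((norm_mul_le _ _).trans (mul_le_of_le_one_left (norm_nonneg _)
      (norm_exp_smul_neg_le_one hZ t))).trans (hR t ht)
  calc ‖W T - exp (T • Z) * W 0‖
      = ‖exp (T • Z) * (exp (T • -Z) * W T - exp ((0 : ℝ) • -Z) * W 0)‖ := by
        rw [zero_smul, exp_zero, one_mul, mul_sub, ← mul_assoc, exp_smul_mul_exp_smul_neg, one_mul]
    _ ≤ ‖exp (T • -Z) * W T - exp ((0 : ℝ) • -Z) * W 0‖ :=
        (norm_mul_le _ _).trans (mul_le_of_le_one_left (norm_nonneg _) (hZ T))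
    _ ≤ C * T ^ (k + 1) / (k + 1) := norm_sub_le_of_norm_deriv_le_pow k hT hG hG'

theorem hasDerivAt_exp_smul_mul_exp_smul_mul_exp_smul (V Y : 𝔸) (t : ℝ) :
    HasDerivAt (fun u : ℝ => exp (u • V) * exp (u • Y) * exp (u • V))
      ((V + Y + V) * (exp (t • V) * exp (t • Y) * exp (t • V)) +
        exp (t • V) * ((expConj Y t V - V) - (expConj (-V) t Y - Y)) *
          exp (t • Y) * exp (t • V)) t := by
  refine (((hasDerivAt_exp_smul_const' V t).mul (hasDerivAt_exp_smul_const' Y t)).mul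
    (hasDerivAt_exp_smul_const V t)).congr_deriv ?_
  have hb := exp_smul_neg_mul_exp_smul Y t
  have ha := exp_smul_mul_exp_smul_neg V t
  have hVa : Commute V (exp (t • V)) := ((Commute.refl V).smul_right t).exp_right
  simp only [Pi.mul_apply, expConj, neg_neg]
  set a := exp (t • V)
  set b := exp (t • Y)
  have e1 : a * (b * V * exp (t • -Y)) * b * a = a * b * (a * V) := by
    rw [show a * (b * V * exp (t • -Y)) * b * a = a * b * (V * (exp (t • -Y) * b) * a) by
      noncomm_ring, hb, mul_one, hVa.eq]
  have e2 : a * (exp (t • -V) * Y * a) * b * a = Y * (a * b * a) := by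
    rw [show a * (exp (t • -V) * Y * a) * b * a = (a * exp (t • -V)) * Y * (a * b * a) by
      noncomm_ring, ha, one_mul]
  have e3 : a * V * b * a = V * (a * b * a) := by
    rw [← hVa.eq]
    noncomm_ring
  calc (V * a * b + a * (Y * b)) * a + a * b * (a * V)
      = (V + Y + V) * (a * b * a) + (a * (b * V * exp (t • -Y)) * b * a - a * V * b * a -
          (a * (exp (t • -V) * Y * a) * b * a - a * Y * b * a)) := by
        rw [e1, e2, e3]
        noncomm_ring
    _ = _ := by noncomm_ring

theorem norm_expConj_sub_sub_expConj_neg_sub_le {V Y : 𝔸} (hV : ∀ t : ℝ, ‖exp (t • V)‖ ≤ 1)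
    (hY : ∀ t : ℝ, ‖exp (t • Y)‖ ≤ 1) {t : ℝ} (ht : 0 ≤ t) :
    ‖(expConj Y t V - V) - (expConj (-V) t Y - Y)‖ ≤
      (‖⁅V, ⁅V, Y⁆⁆‖ + ‖⁅Y, ⁅Y, V⁆⁆‖) / 2 * t ^ 2 := by
  have e : (expConj Y t V - V) - (expConj (-V) t Y - Y) =
      (expConj Y t V - V - t • ⁅Y, V⁆) - (expConj (-V) t Y - Y - t • ⁅-V, Y⁆) := by
    rw [show ⁅-V, Y⁆ = ⁅Y, V⁆ by simp only [Ring.lie_def]; noncomm_ring]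
    abel
  calc ‖(expConj Y t V - V) - (expConj (-V) t Y - Y)‖
      ≤ ‖expConj Y t V - V - t • ⁅Y, V⁆‖ + ‖expConj (-V) t Y - Y - t • ⁅-V, Y⁆‖ := by
        rw [e]
        exact norm_sub_le _ _
    _ ≤ ‖⁅Y, ⁅Y, V⁆⁆‖ * t ^ 2 / 2 + ‖⁅-V, ⁅-V, Y⁆⁆‖ * t ^ 2 / 2 :=
        add_le_add (norm_expConj_sub_sub_le hY V ht)
          (norm_expConj_sub_sub_le (norm_exp_smul_neg_le_one hV) Y ht)
    _ = (‖⁅V, ⁅V, Y⁆⁆‖ + ‖⁅Y, ⁅Y, V⁆⁆‖) / 2 * t ^ 2 := by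
        rw [show ⁅-V, ⁅-V, Y⁆⁆ = ⁅V, ⁅V, Y⁆⁆ by simp only [Ring.lie_def]; noncomm_ring]
        ring

theorem norm_exp_mul_exp_mul_exp_sub_exp_le {V Y : 𝔸} (hV : ∀ t : ℝ, ‖exp (t • V)‖ ≤ 1)
    (hY : ∀ t : ℝ, ‖exp (t • Y)‖ ≤ 1) (hZ : ∀ t : ℝ, ‖exp (t • (V + Y + V))‖ ≤ 1) :
    ‖exp V * exp Y * exp V - exp (V + Y + V)‖ ≤ (‖⁅V, ⁅V, Y⁆⁆‖ + ‖⁅Y, ⁅Y, V⁆⁆‖) / 6 := by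
  have hR : ∀ t ∈ Icc (0 : ℝ) 1,
      ‖exp (t • V) * ((expConj Y t V - V) - (expConj (-V) t Y - Y)) * exp (t • Y) * exp (t • V)‖
        ≤ (‖⁅V, ⁅V, Y⁆⁆‖ + ‖⁅Y, ⁅Y, V⁆⁆‖) / 2 * t ^ 2 := fun t ht => by
    rw [mul_assoc]
    refine (norm_mul_mul_le_of_norm_le_one _ (hV t) ?_).trans
      (norm_expConj_sub_sub_expConj_neg_sub_le hV hY ht.1)
    exact (norm_mul_le _ _).trans (mul_le_one₀ (hY t) (norm_nonneg _) (hV t))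
  have h := norm_sub_exp_smul_mul_le hZ 2 zero_le_one
    (fun t _ => hasDerivAt_exp_smul_mul_exp_smul_mul_exp_smul V Y t) hR
  norm_num at h
  linarith

end

theorem strang_splitting_bound_general {n : Type*} [Fintype n] [DecidableEq n]
    (A B : Matrix n n ℂ) (hA : A.IsHermitian) (hB : B.IsHermitian) :
    ‖NormedSpace.exp ((-Complex.I / 2) • A) * NormedSpace.exp ((-Complex.I) • B) *
        NormedSpace.exp ((-Complex.I / 2) • A) -
        NormedSpace.exp ((-Complex.I) • (A + B))‖ ≤
      (1 / 12) * ‖B * (B * A - A * B) - (B * A - A * B) * B‖ +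
      (1 / 24) * ‖A * (A * B - B * A) - (A * B - B * A) * A‖ := by
  have hV : (-Complex.I / 2) • A ∈ skewAdjoint (Matrix n n ℂ) :=
    IsSelfAdjoint.smul_mem_skewAdjoint (by simp [skewAdjoint.mem_iff, Complex.ext_iff]; norm_num) hA
  have hY : (-Complex.I) • B ∈ skewAdjoint (Matrix n n ℂ) :=
    IsSelfAdjoint.smul_mem_skewAdjoint (by simp [skewAdjoint.mem_iff]) hB
  have hZ : (-Complex.I / 2) • A + (-Complex.I) • B + (-Complex.I / 2) • A =
      (-Complex.I) • (A + B) := by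
    module
  have h := norm_exp_mul_exp_mul_exp_sub_exp_le (norm_exp_smul_le_one_of_mem_skewAdjoint hV)
    (norm_exp_smul_le_one_of_mem_skewAdjoint hY)
    (norm_exp_smul_le_one_of_mem_skewAdjoint (add_mem (add_mem hV hY) hV))
  have hVV : ‖-Complex.I / 2 * (-Complex.I / 2) * -Complex.I‖ = 1 / 4 := by simp; norm_num
  have hYY : ‖-Complex.I * -Complex.I * (-Complex.I / 2)‖ = 1 / 2 := by simp
  rw [hZ, smul_lie_smul_lie_smul, smul_lie_smul_lie_smul, norm_smul, norm_smul, hVV, hYY] at h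
  refine h.trans_eq ?_
  simp only [Ring.lie_def]
  ring

/-- One-step Strang (second-order Suzuki–Trotter) splitting bound
(Lemma SM lem:strang_bound_HrHi), with `[A,B] = A*B − B*A`. -/
theorem strang_splitting_bound {n : Type*} [Fintype n] [DecidableEq n] [Nonempty n]
    (A B : Matrix n n ℂ) (hA : A.IsHermitian) (hB : B.IsHermitian) :
    ‖NormedSpace.exp ((-Complex.I / 2) • A) * NormedSpace.exp ((-Complex.I) • B) *
        NormedSpace.exp ((-Complex.I / 2) • A) -
        NormedSpace.exp ((-Complex.I) • (A + B))‖ ≤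
      (1 / 12) * ‖B * (B * A - A * B) - (B * A - A * B) * B‖ +
      (1 / 24) * ‖A * (A * B - B * A) - (A * B - B * A) * A‖ :=
  strang_splitting_bound_general A B hA hB
end

section
/- Let H_Re^{even}, H_Re^{odd} be Hermitian n×n complex matrices and set H_Re := H_Re^{even} + H_Re^{odd}. Let E_even and E_odd be disjoint finite index sets with E := E_even ∪ E_odd, let {H_{I,ℓ}}_{ℓ∈E} be Hermitian n×n complex matrices, let ξ_ℓ ∈ ℝ for ℓ ∈ E, and let Δt ≥ 0. Define K^{e} := ∑_{ℓ∈E_even} ξ_ℓ•H_{I,ℓ}, K^{o} := ∑_{ℓ∈E_odd} ξ_ℓ•H_{I,ℓ}, and K := K^{e} + K^{o}. Then ‖exp((−i·Δt)•H_Re^{even})·exp((−i·Δt)•H_Re^{odd})·exp((−i)•K^{e})·exp((−i)•K^{o}) − exp((−i)•(Δt•H_Re + K))‖ ≤ (Δt²/2)·‖[H_Re^{even},H_Re^{odd}]‖ + (1/2)·∑_{ℓ∈E_even}∑_{ℓ'∈E_odd} |ξ_ℓ|·|ξ_{ℓ'}|·‖[H_{I,ℓ},H_{I,ℓ'}]‖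 + (Δt/2)·∑_{ℓ∈E} |ξ_ℓ|·‖[H_Re,H_{I,ℓ}]‖. -/
/-!
Exponentials of skew-adjoint elements of a C⋆-algebra are unitary. For skew-adjoint `x, y` the
curve `G t = exp (-t (x + y)) * exp (t x) * exp (t y)` has derivative
`exp (-t (x + y)) * ⁅exp (t x), y⁆ * exp (t y)`, of norm at most `t ‖⁅x, y⁆‖` since
`s ↦ exp (s x) * y * exp (-s x)` moves at speed `‖⁅x, y⁆‖`; integrating over `[0, 1]` gives the
first-order Trotter bound `‖exp (x + y) - exp x * exp y‖ ≤ ‖⁅x, y⁆‖ / 2`. The even–odd product is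
compared with `exp (-iΔt H_Re) exp (-iK)` and then with `exp (-i (Δt H_Re + K))` by three uses of
this bound, after which the commutators are expanded bilinearly.
-/

open scoped Matrix.Norms.L2Operator
open Matrix NormedSpace

section Exponential

variable {𝔸 : Type*} [NormedRing 𝔸] [NormedAlgebra ℝ 𝔸] [CompleteSpace 𝔸]

-- The library versions of these facts assume `[NormedAlgebra ℚ 𝔸]`, which is not an instance
-- for `Matrix n n ℂ` with the L2 operator norm.
theorem exp_add_of_commute_of_normedAlgebra_real {x y : 𝔸} (h : Commute x y) :
    exp (x + y) = exp x * exp y := by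
  have hball (z : 𝔸) : z ∈ Metric.eball (0 : 𝔸) (expSeries ℝ 𝔸).radius := by
    simp [expSeries_radius_eq_top]
  exact exp_add_of_commute_of_mem_ball h (hball x) (hball y)

theorem exp_neg_mul_exp_of_normedAlgebra_real (x : 𝔸) : exp (-x) * exp x = 1 := by
  rw [← exp_add_of_commute_of_normedAlgebra_real (Commute.refl x).neg_left, neg_add_cancel,
    exp_zero]

theorem exp_mul_exp_neg_of_normedAlgebra_real (x : 𝔸) : exp x * exp (-x) = 1 := by
  simpa using exp_neg_mul_exp_of_normedAlgebra_real (-x)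

variable [StarRing 𝔸]

theorem exp_mem_unitary_of_mem_skewAdjoint_of_normedAlgebra_real [ContinuousStar 𝔸] {x : 𝔸}
    (hx : x ∈ skewAdjoint 𝔸) : exp x ∈ unitary 𝔸 := by
  rw [Unitary.mem_iff, star_exp, skewAdjoint.mem_iff.mp hx]
  exact ⟨exp_neg_mul_exp_of_normedAlgebra_real x, exp_mul_exp_neg_of_normedAlgebra_real x⟩

variable [StarModule ℝ 𝔸]

theorem exp_smul_mem_unitary [ContinuousStar 𝔸] {x : 𝔸} (hx : x ∈ skewAdjoint 𝔸) (t : ℝ) :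
    exp (t • x) ∈ unitary 𝔸 :=
  exp_mem_unitary_of_mem_skewAdjoint_of_normedAlgebra_real (skewAdjoint.smul_mem t hx)

variable [CStarRing 𝔸]

theorem norm_lie_exp_smul_le {x : 𝔸} (hx : x ∈ skewAdjoint 𝔸) (y : 𝔸) {t : ℝ} (ht : 0 ≤ t) :
    ‖⁅exp (t • x), y⁆‖ ≤ t * ‖⁅x, y⁆‖ := by
  set g : ℝ → 𝔸 := fun s => exp (s • x) * y * exp (s • -x)
  have hg (s : ℝ) : HasDerivAt g (exp (s • x) * ⁅x, y⁆ * exp (s • -x)) s := by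
    refine (((hasDerivAt_exp_smul_const x s).mul_const y).mul
      (hasDerivAt_exp_smul_const' (-x) s)).congr_deriv ?_
    rw [Ring.lie_def]
    noncomm_ring
  have hg' (s : ℝ) : ‖exp (s • x) * ⁅x, y⁆ * exp (s • -x)‖ = ‖⁅x, y⁆‖ := by
    rw [CStarRing.norm_mul_mem_unitary _ (exp_smul_mem_unitary (neg_mem hx) s),
      CStarRing.norm_mem_unitary_mul _ (exp_smul_mem_unitary hx s)]
  have hmvt := (convex_Icc 0 t).norm_image_sub_le_of_norm_hasDerivWithin_le
    (fun s _ => (hg s).hasDerivWithinAt) (fun s _ => (hg' s).le)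
    (Set.left_mem_Icc.2 ht) (Set.right_mem_Icc.2 ht)
  have hlie : ⁅exp (t • x), y⁆ = (g t - g 0) * exp (t • x) := by
    simp only [g, zero_smul, neg_zero, exp_zero, mul_one, one_mul, sub_mul, mul_assoc, smul_neg,
      exp_neg_mul_exp_of_normedAlgebra_real, Ring.lie_def]
  rw [hlie, CStarRing.norm_mul_mem_unitary _ (exp_smul_mem_unitary hx t)]
  simpa [abs_of_nonneg ht, mul_comm] using hmvt

theorem norm_exp_add_sub_exp_mul_exp_le {x y : 𝔸} (hx : x ∈ skewAdjoint 𝔸)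
    (hy : y ∈ skewAdjoint 𝔸) : ‖exp (x + y) - exp x * exp y‖ ≤ ‖⁅x, y⁆‖ / 2 := by
  set G : ℝ → 𝔸 := fun t => exp (t • -(x + y)) * (exp (t • x) * exp (t • y))
  set G' : ℝ → 𝔸 := fun t => exp (t • -(x + y)) * (⁅exp (t • x), y⁆ * exp (t • y))
  have hG (t : ℝ) : HasDerivAt G (G' t) t := by
    refine ((hasDerivAt_exp_smul_const (-(x + y)) t).mul
      ((hasDerivAt_exp_smul_const' x t).mul (hasDerivAt_exp_smul_const' y t))).congr_deriv ?_
    simp only [G', Pi.mul_apply, Ring.lie_def]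
    noncomm_ring
  have hG' : ∀ t ∈ Set.Ico (0 : ℝ) 1, ‖G' t‖ ≤ ‖⁅x, y⁆‖ * t := fun t ht => by
    rw [CStarRing.norm_mem_unitary_mul _ (exp_smul_mem_unitary (neg_mem (add_mem hx hy)) t),
      CStarRing.norm_mul_mem_unitary _ (exp_smul_mem_unitary hy t), mul_comm]
    exact norm_lie_exp_smul_le hx y ht.1
  have hB (t : ℝ) : HasDerivAt (fun t => ‖⁅x, y⁆‖ / 2 * t ^ 2) (‖⁅x, y⁆‖ * t) t := by
    refine ((hasDerivAt_pow 2 t).const_mul (‖⁅x, y⁆‖ / 2)).congr_deriv ?_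
    push_cast
    ring
  have hbound := image_norm_le_of_norm_deriv_right_le_deriv_boundary (f := fun t => G t - G 0)
    (fun t _ => ((hG t).sub_const _).continuousAt.continuousWithinAt)
    (fun t _ => ((hG t).sub_const _).hasDerivWithinAt) (by simp) hB hG'
    (Set.right_mem_Icc.2 zero_le_one)
  have hG0 : G 0 = 1 := by simp [G]
  have hG1 : exp (x + y) * G 1 = exp x * exp y := by
    simp only [G, one_smul, ← mul_assoc, exp_mul_exp_neg_of_normedAlgebra_real, one_mul]
  rw [← hG1, ← mul_one (exp (x + y)), mul_assoc, ← mul_sub, one_mul,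
    CStarRing.norm_mem_unitary_mul _
      (exp_mem_unitary_of_mem_skewAdjoint_of_normedAlgebra_real (add_mem hx hy)), ← hG0,
    norm_sub_rev]
  simpa using hbound

theorem norm_exp_mul_exp_mul_exp_mul_exp_sub_exp_le {a b c d : 𝔸} (ha : a ∈ skewAdjoint 𝔸)
    (hb : b ∈ skewAdjoint 𝔸) (hc : c ∈ skewAdjoint 𝔸) (hd : d ∈ skewAdjoint 𝔸) :
    ‖exp a * exp b * exp c * exp d - exp (a + b + (c + d))‖ ≤
      ‖⁅a, b⁆‖ / 2 + ‖⁅c, d⁆‖ / 2 + ‖⁅a + b, c + d⁆‖ / 2 := by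
  have hab := add_mem ha hb
  have hcd := add_mem hc hd
  have hu (x : 𝔸) (hx : x ∈ skewAdjoint 𝔸) :=
    exp_mem_unitary_of_mem_skewAdjoint_of_normedAlgebra_real hx
  calc _ = ‖(exp a * exp b - exp (a + b)) * (exp c * exp d) +
        exp (a + b) * (exp c * exp d - exp (c + d)) +
        (exp (a + b) * exp (c + d) - exp (a + b + (c + d)))‖ := by congr 1; noncomm_ring
    _ ≤ ‖(exp a * exp b - exp (a + b)) * (exp c * exp d)‖ +
        ‖exp (a + b) * (exp c * exp d - exp (c + d))‖ +
        ‖exp (a + b) * exp (c + d) - exp (a + b + (c + d))‖ := norm_add₃_le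
    _ = ‖exp (a + b) - exp a * exp b‖ + ‖exp (c + d) - exp c * exp d‖ +
        ‖exp (a + b + (c + d)) - exp (a + b) * exp (c + d)‖ := by
      rw [CStarRing.norm_mul_mem_unitary _ (mul_mem (hu c hc) (hu d hd)),
        CStarRing.norm_mem_unitary_mul _ (hu _ hab), norm_sub_rev (exp a * _),
        norm_sub_rev (exp c * _), norm_sub_rev (exp (a + b) * _)]
    _ ≤ _ := by
      gcongr <;> exact norm_exp_add_sub_exp_mul_exp_le ‹_› ‹_›

end Exponential

section Commutator

attribute [local instance] LieRing.ofAssociativeRing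

variable {𝕜 A ι κ : Type*} [NormedField 𝕜] [NormedRing A] [NormedAlgebra 𝕜 A]

theorem norm_lie_smul_smul (a b : 𝕜) (x y : A) : ‖⁅a • x, b • y⁆‖ = ‖a‖ * ‖b‖ * ‖⁅x, y⁆‖ := by
  rw [smul_lie, lie_smul, norm_smul, norm_smul, mul_assoc]

theorem norm_lie_sum_smul_le (x : A) (s : Finset ι) (c : ι → 𝕜) (f : ι → A) :
    ‖⁅x, ∑ i ∈ s, c i • f i⁆‖ ≤ ∑ i ∈ s, ‖c i‖ * ‖⁅x, f i⁆‖ := by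
  rw [lie_sum]
  refine (norm_sum_le _ _).trans_eq (Finset.sum_congr rfl fun i _ => ?_)
  rw [lie_smul, norm_smul]

theorem norm_lie_sum_smul_sum_smul_le (s : Finset ι) (t : Finset κ) (c : ι → 𝕜) (d : κ → 𝕜)
    (f : ι → A) (g : κ → A) :
    ‖⁅∑ i ∈ s, c i • f i, ∑ j ∈ t, d j • g j⁆‖ ≤
      ∑ i ∈ s, ∑ j ∈ t, ‖c i‖ * ‖d j‖ * ‖⁅f i, g j⁆‖ := by
  rw [sum_lie_sum]
  refine (norm_sum_le _ _).trans (Finset.sum_le_sum fun i _ => ?_)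
  refine (norm_sum_le _ _).trans_eq (Finset.sum_congr rfl fun j _ => ?_)
  rw [norm_lie_smul_smul]

end Commutator

theorem lie_trotter_even_odd_onestep_bound_general {n : Type*} [Fintype n] [DecidableEq n]
    {ι : Type*} [DecidableEq ι]
    (HRee HReo : Matrix n n ℂ) (hRee : HRee.IsHermitian) (hReo : HReo.IsHermitian)
    (Ee Eo : Finset ι) (hdisj : Disjoint Ee Eo)
    (HI : ι → Matrix n n ℂ) (hI : ∀ ℓ ∈ Ee ∪ Eo, (HI ℓ).IsHermitian)
    (ξ : ι → ℝ) (Δt : ℝ) (hΔt : 0 ≤ Δt)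
    (HRe Ke Ko K : Matrix n n ℂ)
    (hHRe : HRe = HRee + HReo)
    (hKe : Ke = ∑ ℓ ∈ Ee, ξ ℓ • HI ℓ) (hKo : Ko = ∑ ℓ ∈ Eo, ξ ℓ • HI ℓ)
    (hK : K = Ke + Ko) :
    ‖NormedSpace.exp (((-Complex.I) * (Δt : ℂ)) • HRee) *
        NormedSpace.exp (((-Complex.I) * (Δt : ℂ)) • HReo) *
        NormedSpace.exp ((-Complex.I) • Ke) *
        NormedSpace.exp ((-Complex.I) • Ko) -
        NormedSpace.exp ((-Complex.I) • (Δt • HRe + K))‖ ≤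
      Δt ^ 2 / 2 * ‖HRee * HReo - HReo * HRee‖ +
      1 / 2 * ∑ ℓ ∈ Ee, ∑ ℓ' ∈ Eo,
          |ξ ℓ| * |ξ ℓ'| * ‖HI ℓ * HI ℓ' - HI ℓ' * HI ℓ‖ +
      Δt / 2 * ∑ ℓ ∈ Ee ∪ Eo, |ξ ℓ| * ‖HRe * HI ℓ - HI ℓ * HRe‖ := by
  have hI_skew : -Complex.I ∈ skewAdjoint ℂ := by simp [skewAdjoint.mem_iff]
  have hIΔt_skew : -Complex.I * Δt ∈ skewAdjoint ℂ := by simp [skewAdjoint.mem_iff]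
  have hK_sa {s : Finset ι} (hs : s ⊆ Ee ∪ Eo) : IsSelfAdjoint (∑ ℓ ∈ s, ξ ℓ • HI ℓ) :=
    isSelfAdjoint_sum s fun ℓ hℓ => (IsSelfAdjoint.all (ξ ℓ)).smul (hI ℓ (hs hℓ)).isSelfAdjoint
  have hsplit : (-Complex.I) • (Δt • HRe + K) =
      (-Complex.I * Δt) • HRee + (-Complex.I * Δt) • HReo +
        ((-Complex.I) • Ke + (-Complex.I) • Ko) := by
    rw [hHRe, hK, RCLike.real_smul_eq_coe_smul (K := ℂ)]
    module
  rw [hsplit]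
  refine (norm_exp_mul_exp_mul_exp_mul_exp_sub_exp_le
    (hRee.isSelfAdjoint.smul_mem_skewAdjoint hIΔt_skew)
    (hReo.isSelfAdjoint.smul_mem_skewAdjoint hIΔt_skew)
    ((hKe ▸ hK_sa Finset.subset_union_left).smul_mem_skewAdjoint hI_skew)
    ((hKo ▸ hK_sa Finset.subset_union_right).smul_mem_skewAdjoint hI_skew)).trans ?_
  have hKeo := norm_lie_sum_smul_sum_smul_le Ee Eo ξ ξ HI HI
  have hReK := norm_lie_sum_smul_le HRe (Ee ∪ Eo) ξ HI
  rw [← hKe, ← hKo] at hKeo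
  rw [Finset.sum_union hdisj, ← hKe, ← hKo, ← hK] at hReK
  simp only [Real.norm_eq_abs] at hKeo hReK
  rw [← smul_add, ← smul_add, ← hHRe, ← hK]
  simp only [norm_lie_smul_smul, norm_mul, norm_neg, Complex.norm_I, Complex.norm_real,
    Real.norm_of_nonneg hΔt, one_mul, ← Ring.lie_def]
  calc _ = Δt ^ 2 / 2 * ‖⁅HRee, HReo⁆‖ + 1 / 2 * ‖⁅Ke, Ko⁆‖ + Δt / 2 * ‖⁅HRe, K⁆‖ := by ring
    _ ≤ _ := by gcongr

/-- One-step error bound for the Lie–Trotter even–odd implementation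
(Proposition SM lem:onestep_combined_eo, Eq. onestep_combined_eo_bound_expanded),
with `[A,B] = A*B − B*A`. -/
theorem lie_trotter_even_odd_onestep_bound {n : Type*} [Fintype n] [DecidableEq n] [Nonempty n]
    {ι : Type*} [Fintype ι] [DecidableEq ι]
    (HRee HReo : Matrix n n ℂ) (hRee : HRee.IsHermitian) (hReo : HReo.IsHermitian)
    (Ee Eo : Finset ι) (hdisj : Disjoint Ee Eo)
    (HI : ι → Matrix n n ℂ) (hI : ∀ ℓ ∈ Ee ∪ Eo, (HI ℓ).IsHermitian)
    (ξ : ι → ℝ) (Δt : ℝ) (hΔt : 0 ≤ Δt)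
    (HRe Ke Ko K : Matrix n n ℂ)
    (hHRe : HRe = HRee + HReo)
    (hKe : Ke = ∑ ℓ ∈ Ee, ξ ℓ • HI ℓ) (hKo : Ko = ∑ ℓ ∈ Eo, ξ ℓ • HI ℓ)
    (hK : K = Ke + Ko) :
    ‖NormedSpace.exp (((-Complex.I) * (Δt : ℂ)) • HRee) *
        NormedSpace.exp (((-Complex.I) * (Δt : ℂ)) • HReo) *
        NormedSpace.exp ((-Complex.I) • Ke) *
        NormedSpace.exp ((-Complex.I) • Ko) -
        NormedSpace.exp ((-Complex.I) • (Δt • HRe + K))‖ ≤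
      Δt ^ 2 / 2 * ‖HRee * HReo - HReo * HRee‖ +
      1 / 2 * ∑ ℓ ∈ Ee, ∑ ℓ' ∈ Eo,
          |ξ ℓ| * |ξ ℓ'| * ‖HI ℓ * HI ℓ' - HI ℓ' * HI ℓ‖ +
      Δt / 2 * ∑ ℓ ∈ Ee ∪ Eo, |ξ ℓ| * ‖HRe * HI ℓ - HI ℓ * HRe‖ :=
  lie_trotter_even_odd_onestep_bound_general HRee HReo hRee hReo Ee Eo hdisj HI hI ξ Δt hΔt HRe Ke
    Ko K hHRe hKe hKo hK
end

section
/- Let H and O be Hermitian n×n complex matrices and let ρ be a positive semidefinite n×n complex matrix with Tr ρ = 1. Define X : ℝ → ℝ by X(ξ) := Re Tr(O * exp((−i·ξ)•H) * ρ * exp((i·ξ)•H)). Then X is differentiable and for every ξ ∈ ℝ, |X'(ξ)| ≤ ‖[H, O]‖ ≤ 2·‖H‖·‖O‖. -/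
/-!
With `K = -iH`, the conjugated state `S ξ = exp (ξK) ρ exp (-ξK)` is a unitary conjugate of `ρ`,
so it is positive semidefinite with unit trace, and `S' = K S - S K`. Cycling the trace turns
`X' = Re Tr (O S')` into `Re (i Tr ([H, O] S))`. Finally `|Tr (A S)| ≤ ‖A‖ Tr S` for positive
semidefinite `S`: writing `S = ∑ v vᴴ`, each rank-one term contributes `⟨v, A v⟩`, of modulus at
most `‖A‖ ‖v‖²`.
-/

open scoped Matrix.Norms.L2Operator ComplexOrder
open Matrix NormedSpace

theorem hasDerivAt_exp_smul_mul_mul_exp_neg_smul_s15 {𝕂 𝔸 : Type*} [RCLike 𝕂] [NormedRing 𝔸]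
    [NormedAlgebra 𝕂 𝔸] [CompleteSpace 𝔸] (K ρ : 𝔸) (t : 𝕂) :
    HasDerivAt (fun u : 𝕂 => exp (u • K) * ρ * exp (-(u • K)))
      (K * (exp (t • K) * ρ * exp (-(t • K))) - exp (t • K) * ρ * exp (-(t • K)) * K) t := by
  have hneg : HasDerivAt (fun u : 𝕂 => exp (-(u • K))) (exp (-(t • K)) * -K) t := by
    simpa only [smul_neg] using hasDerivAt_exp_smul_const (-K) t
  exact (((hasDerivAt_exp_smul_const' K t).mul_const ρ).mul hneg).congr_deriv (by noncomm_ring)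

theorem trace_mul_commutator {n R : Type*} [Fintype n] [CommRing R] (O K S : Matrix n n R) :
    (O * (K * S - S * K)).trace = ((O * K - K * O) * S).trace := by
  rw [mul_sub, sub_mul, trace_sub, trace_sub, ← mul_assoc, ← mul_assoc, trace_mul_cycle O S K]

theorem norm_commutator_le {A : Type*} [NonUnitalNormedRing A] (a b : A) :
    ‖a * b - b * a‖ ≤ 2 * ‖a‖ * ‖b‖ := by
  linarith [norm_sub_le (a * b) (b * a), norm_mul_le a b, norm_mul_le b a]

section L2OpNorm

variable {n 𝕜 : Type*} [Fintype n] [DecidableEq n] [RCLike 𝕜]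

theorem norm_mulVec_dotProduct_star_le (A : Matrix n n 𝕜) (v : n → 𝕜) :
    ‖A *ᵥ v ⬝ᵥ star v‖ ≤ ‖A‖ * RCLike.re (v ⬝ᵥ star v) := by
  set x : EuclideanSpace 𝕜 n := WithLp.toLp 2 v
  calc ‖A *ᵥ v ⬝ᵥ star v‖ = ‖inner 𝕜 x (WithLp.toLp 2 (A *ᵥ v))‖ := rfl
    _ ≤ ‖x‖ * ‖WithLp.toLp 2 (A *ᵥ v)‖ := norm_inner_le_norm _ _
    _ ≤ ‖x‖ * (‖A‖ * ‖x‖) := by gcongr; exact A.l2_opNorm_mulVec x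
    _ = ‖A‖ * RCLike.re (v ⬝ᵥ star v) := by
      rw [← mul_assoc, mul_comm ‖x‖, mul_assoc, ← sq, norm_sq_eq_re_inner (𝕜 := 𝕜)]; rfl

theorem norm_trace_mul_le_of_posSemidef (A S : Matrix n n 𝕜) (hS : S.PosSemidef) :
    ‖(A * S).trace‖ ≤ ‖A‖ * RCLike.re S.trace := by
  obtain ⟨m, v, rfl⟩ := posSemidef_iff_eq_sum_vecMulVec.mp hS
  simp only [Finset.mul_sum, trace_sum, mul_vecMulVec, trace_vecMulVec, map_sum]
  exact (norm_sum_le _ _).trans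
    (Finset.sum_le_sum fun i _ => norm_mulVec_dotProduct_star_le A (v i))

theorem trace_exp_mul_mul_exp_neg (A ρ : Matrix n n 𝕜) :
    (exp A * ρ * exp (-A)).trace = ρ.trace := by
  rw [Matrix.exp_neg, trace_conj (isUnit_exp A)]

theorem Matrix.PosSemidef.exp_mul_mul_exp_neg {A ρ : Matrix n n 𝕜} (hρ : ρ.PosSemidef)
    (hA : Aᴴ = -A) :
    (exp A * ρ * exp (-A)).PosSemidef := by
  rw [← hA, exp_conjTranspose]
  exact hρ.mul_mul_conjTranspose_same _

end L2OpNorm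

theorem HasDerivAt.re_trace_mul {n : Type*} [Fintype n] [DecidableEq n] {f : ℝ → Matrix n n ℂ}
    {f' : Matrix n n ℂ} {t : ℝ} (O : Matrix n n ℂ) (hf : HasDerivAt f f' t) :
    HasDerivAt (fun s => (O * f s).trace.re) (O * f').trace.re t :=
  (Complex.reCLM.comp ((traceLinearMap n ℂ ℂ).toContinuousLinearMap.restrictScalars ℝ)).hasFDerivAt
    |>.comp_hasDerivAt t (hf.const_mul O)

theorem single_increment_derivative_bound_general {n : Type*} [Fintype n] [DecidableEq n]
    (H O ρ : Matrix n n ℂ) (hH : H.IsHermitian)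
    (hρ : ρ.PosSemidef) (hρtr : ρ.trace = 1)
    (X : ℝ → ℝ)
    (hX : ∀ ξ : ℝ, X ξ =
      ((O * (NormedSpace.exp (((-Complex.I) * (ξ : ℂ)) • H) * ρ *
        NormedSpace.exp ((Complex.I * (ξ : ℂ)) • H))).trace).re) :
    Differentiable ℝ X ∧
    ∀ ξ : ℝ, |deriv X ξ| ≤ ‖H * O - O * H‖ ∧ ‖H * O - O * H‖ ≤ 2 * ‖H‖ * ‖O‖ := by
  set K := -Complex.I • H
  set S : ℝ → Matrix n n ℂ := fun ξ => exp (ξ • K) * ρ * exp (-(ξ • K))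
  have hXS : X = fun ξ => (O * S ξ).trace.re := funext fun ξ => by
    have hleft : (-Complex.I * ξ) • H = ξ • K := by
      rw [← Complex.coe_smul, smul_smul, mul_comm]
    have hright : (Complex.I * ξ) • H = -(ξ • K) := by
      rw [← Complex.coe_smul, smul_smul, ← neg_smul]; ring_nf
    rw [hX, hleft, hright]
  have hK : ∀ ξ : ℝ, (ξ • K)ᴴ = -(ξ • K) := fun ξ => by
    simp [K, conjTranspose_smul, hH.eq]
  have hcomm : O * K - K * O = Complex.I • (H * O - O * H) := by
    simp only [K, neg_smul, mul_neg, neg_mul, mul_smul_comm, smul_mul_assoc, smul_sub]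
    abel
  have hderiv : ∀ ξ, HasDerivAt X (Complex.I * ((H * O - O * H) * S ξ).trace).re ξ := fun ξ => by
    rw [hXS]
    convert (hasDerivAt_exp_smul_mul_mul_exp_neg_smul_s15 K ρ ξ).re_trace_mul O using 2
    rw [trace_mul_commutator, hcomm, smul_mul_assoc, trace_smul, smul_eq_mul]
  have hbound : ∀ ξ, ‖((H * O - O * H) * S ξ).trace‖ ≤ ‖H * O - O * H‖ := fun ξ => by
    simpa [S, trace_exp_mul_mul_exp_neg, hρtr] using
      norm_trace_mul_le_of_posSemidef (H * O - O * H) (S ξ) (hρ.exp_mul_mul_exp_neg (hK ξ))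
  refine ⟨fun ξ => (hderiv ξ).differentiableAt, fun ξ => ⟨?_, norm_commutator_le H O⟩⟩
  rw [(hderiv ξ).deriv]
  calc _ ≤ ‖Complex.I * ((H * O - O * H) * S ξ).trace‖ := Complex.abs_re_le_norm _
    _ ≤ ‖H * O - O * H‖ := by rw [norm_mul, Complex.norm_I, one_mul]; exact hbound ξ

/-- Single-increment derivative bound from the proof of
Lemma SM lem:single_traj_variance_bound: `X(ξ) = Re Tr(O · e^{−iξH} ρ e^{iξH})` is
differentiable with `|X'(ξ)| ≤ ‖[H,O]‖ ≤ 2‖H‖‖O‖`. -/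
theorem single_increment_derivative_bound {n : Type*} [Fintype n] [DecidableEq n] [Nonempty n]
    (H O ρ : Matrix n n ℂ) (hH : H.IsHermitian) (hO : O.IsHermitian)
    (hρ : ρ.PosSemidef) (hρtr : ρ.trace = 1)
    (X : ℝ → ℝ)
    (hX : ∀ ξ : ℝ, X ξ =
      ((O * (NormedSpace.exp (((-Complex.I) * (ξ : ℂ)) • H) * ρ *
        NormedSpace.exp ((Complex.I * (ξ : ℂ)) • H))).trace).re) :
    Differentiable ℝ X ∧
    ∀ ξ : ℝ, |deriv X ξ| ≤ ‖H * O - O * H‖ ∧ ‖H * O - O * H‖ ≤ 2 * ‖H‖ * ‖O‖ :=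
  single_increment_derivative_bound_general H O ρ hH hρ hρtr X hX
end

section
/- Let H be a Hermitian n×n complex matrix, let a > 0, and let ad_H denote the linear endomorphism of the space of n×n complex matrices given by ad_H(ρ) := H*ρ − ρ*H. Then for every n×n complex matrix ρ, ∫ exp((−i·ξ)•H) * ρ * exp((i·ξ)•H) d(gaussianReal 0 (2a))(ξ) = exp(−a • ad_H²)(ρ), where exp(−a • ad_H²) is the exponential of the endomorphism −a·(ad_H ∘ ad_H). -/
/-!
Diagonalize `H = U D U⋆` with `D = diag λ`. In the frame of `U`, both the conjugation
`ρ ↦ e^{-iξH} ρ e^{iξH}` and `ad_H` act as entrywise (Schur) multipliers, by `e^{iξ(λₖ - λⱼ)}` and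
`λⱼ - λₖ` respectively. Sending a multiplier to its Schur map is a continuous algebra homomorphism,
so it commutes with `exp` and with the Gaussian average, and the claim reduces entrywise to the
characteristic function `𝔼 e^{iξt} = e^{-a t²}` of `ξ ∼ N(0, 2a)`.
-/

open scoped Matrix.Norms.L2Operator NNReal
open Matrix MeasureTheory ProbabilityTheory

/-- The operator-norm topology on continuous linear endomorphisms of the matrix space
makes it a topological ring (the two topologies agree definitionally). -/
noncomputable instance matrixCLMTopologicalRing {n : Type*} [Fintype n] [DecidableEq n] :
    IsTopologicalRing (Matrix n n ℂ →L[ℂ] Matrix n n ℂ) := by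
  have h := @NonUnitalSeminormedRing.toIsTopologicalRing (Matrix n n ℂ →L[ℂ] Matrix n n ℂ)
    inferInstance
  exact h

open Unitary (conjStarAlgAut)

theorem Matrix.diagonal_mul_mul_diagonal {m n α : Type*} [Fintype m] [Fintype n] [DecidableEq m]
    [DecidableEq n] [CommSemiring α] (a : m → α) (b : n → α) (M : Matrix m n α) :
    diagonal a * M * diagonal b = of (fun j k ↦ a j * b k) ⊙ M := by
  ext j k
  simp only [diagonal_mul, mul_diagonal, hadamard_apply, of_apply]
  ring

theorem Matrix.diagonal_mul_sub_mul_diagonal {n α : Type*} [Fintype n] [DecidableEq n]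
    [CommRing α] (d : n → α) (M : Matrix n n α) :
    diagonal d * M - M * diagonal d = of (fun j k ↦ d j - d k) ⊙ M := by
  ext j k
  simp only [sub_apply, diagonal_mul, mul_diagonal, hadamard_apply, of_apply]
  ring

section
variable {n : Type*} [Fintype n] [DecidableEq n] (U : unitary (Matrix n n ℂ))

/-- Schur multiplication `ρ ↦ U (w ⊙ U⋆ ρ U) U⋆` in the frame of `U`, bundled as an algebra
homomorphism so that it commutes with `exp`. -/
noncomputable def conjHadamard : (n → n → ℂ) →ₐ[ℂ] (Matrix n n ℂ →L[ℂ] Matrix n n ℂ) :=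
  (Module.End.toContinuousLinearMap (Matrix n n ℂ)).toAlgHom.comp <|
    (((ofLinearEquiv ℂ).trans (conjStarAlgAut ℂ _ U).toAlgEquiv.toLinearEquiv).conjAlgEquiv
      ℂ).toAlgHom.comp (Algebra.lmul ℂ (n → n → ℂ))

theorem conjHadamard_apply (w : n → n → ℂ) (ρ : Matrix n n ℂ) :
    conjHadamard U w ρ = conjStarAlgAut ℂ _ U (of w ⊙ (conjStarAlgAut ℂ _ U).symm ρ) :=
  rfl

theorem conjHadamard_apply_conjStarAlgAut (w : n → n → ℂ) (M : Matrix n n ℂ) :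
    conjHadamard U w (conjStarAlgAut ℂ _ U M) = conjStarAlgAut ℂ _ U (of w ⊙ M) := by
  rw [conjHadamard_apply, StarAlgEquiv.symm_apply_apply]

theorem continuous_conjHadamard : Continuous (conjHadamard U) :=
  (conjHadamard U).toLinearMap.continuous_of_finiteDimensional

theorem exp_conjHadamard (w : n → n → ℂ) :
    NormedSpace.exp (conjHadamard U w) = conjHadamard U (fun j k ↦ Complex.exp (w j k)) := by
  have h := NormedSpace.map_exp (conjHadamard U).toRingHom (continuous_conjHadamard U) w
  refine h.symm.trans (congrArg (conjHadamard U) ?_)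
  ext j k
  simp [Pi.coe_exp, Complex.exp_eq_exp_ℂ]

theorem integral_conjHadamard_apply {X : Type*} [MeasurableSpace X] {μ : Measure X}
    {f : X → n → n → ℂ} (hf : Integrable f μ) (ρ : Matrix n n ℂ) :
    ∫ ξ, conjHadamard U (f ξ) ρ ∂μ = conjHadamard U (∫ ξ, f ξ ∂μ) ρ := by
  have h := ((ContinuousLinearMap.apply ℂ (Matrix n n ℂ) ρ).comp
    (LinearMap.toContinuousLinearMap (conjHadamard U).toLinearMap)).integral_comp_comm hf
  exact h

theorem exp_conjStarAlgAut (A : Matrix n n ℂ) :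
    NormedSpace.exp (conjStarAlgAut ℂ _ U A) = conjStarAlgAut ℂ _ U (NormedSpace.exp A) :=
  Matrix.exp_units_conj (Unitary.toUnits U) A

theorem exp_smul_conjStarAlgAut_diagonal (d : n → ℂ) (c : ℂ) :
    NormedSpace.exp (c • conjStarAlgAut ℂ _ U (diagonal d)) =
      conjStarAlgAut ℂ _ U (diagonal fun i ↦ Complex.exp (c * d i)) := by
  rw [← map_smul, exp_conjStarAlgAut, ← diagonal_smul, exp_diagonal]
  congr with i
  simp [Pi.coe_exp, Complex.exp_eq_exp_ℂ]

variable {U} {H : Matrix n n ℂ} {d : n → ℂ}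

theorem exp_neg_smul_mul_mul_exp_smul (hH : H = conjStarAlgAut ℂ _ U (diagonal d)) (c : ℂ)
    (ρ : Matrix n n ℂ) :
    NormedSpace.exp ((-c) • H) * ρ * NormedSpace.exp (c • H) =
      conjHadamard U (fun j k ↦ Complex.exp (c * (d k - d j))) ρ := by
  rw [← StarAlgEquiv.apply_symm_apply (conjStarAlgAut ℂ _ U) ρ, hH,
    exp_smul_conjStarAlgAut_diagonal, exp_smul_conjStarAlgAut_diagonal, ← map_mul, ← map_mul,
    diagonal_mul_mul_diagonal, conjHadamard_apply_conjStarAlgAut]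
  congr with j k
  rw [← Complex.exp_add]
  ring_nf

theorem toContinuousLinearMap_mulLeft_sub_mulRight_eq_conjHadamard
    (hH : H = conjStarAlgAut ℂ _ U (diagonal d)) :
    LinearMap.toContinuousLinearMap (LinearMap.mulLeft ℂ H - LinearMap.mulRight ℂ H) =
      conjHadamard U (fun j k ↦ d j - d k) := by
  ext1 ρ
  set M := (conjStarAlgAut ℂ _ U).symm ρ
  have hρ : ρ = conjStarAlgAut ℂ _ U M := (StarAlgEquiv.apply_symm_apply _ ρ).symm
  calc H * ρ - ρ * H = conjStarAlgAut ℂ _ U (diagonal d * M - M * diagonal d) := by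
        rw [hH, hρ, map_sub, map_mul, map_mul]
    _ = _ := by
        rw [diagonal_mul_sub_mul_diagonal, ← conjHadamard_apply_conjStarAlgAut, ← hρ]

end

theorem integrable_cexp_mul_I {μ : Measure ℝ} [IsFiniteMeasure μ] (t : ℝ) :
    Integrable (fun ξ : ℝ ↦ Complex.exp (t * ξ * Complex.I)) μ :=
  .of_bound (by fun_prop) 1 (ae_of_all _ fun ξ ↦ by
    rw [← Complex.ofReal_mul, Complex.norm_exp_ofReal_mul_I])

theorem integrable_pi_cexp_mul_I {ι κ : Type*} [Fintype ι] [Fintype κ] {μ : Measure ℝ}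
    [IsFiniteMeasure μ] (t : ι → κ → ℝ) :
    Integrable (fun ξ : ℝ ↦ fun j k ↦ Complex.exp (t j k * ξ * Complex.I)) μ :=
  integrable_pi_iff.2 fun _ ↦ integrable_pi_iff.2 fun _ ↦ integrable_cexp_mul_I _

theorem integral_cexp_mul_I_gaussianReal (v : ℝ≥0) (t : ℝ) :
    ∫ ξ, Complex.exp (t * ξ * Complex.I) ∂gaussianReal 0 v = Complex.exp (-(v * t ^ 2 / 2)) := by
  rw [← charFun_apply_real, charFun_gaussianReal]
  simp

theorem integral_pi_cexp_mul_I_gaussianReal {ι κ : Type*} [Fintype ι] [Fintype κ] (v : ℝ≥0)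
    (t : ι → κ → ℝ) :
    ∫ ξ, (fun j k ↦ Complex.exp (t j k * ξ * Complex.I)) ∂gaussianReal 0 v =
      fun j k ↦ Complex.exp (-(v * t j k ^ 2 / 2)) := by
  ext j k
  rw [eval_integral (fun _ ↦ integrable_pi_iff.1 (integrable_pi_cexp_mul_I t) _),
    eval_integral (fun _ ↦ integrable_cexp_mul_I _), integral_cexp_mul_I_gaussianReal]

theorem gaussian_averaging_closed_form_general {n : Type*} [Fintype n] [DecidableEq n]
    (H : Matrix n n ℂ) (hH : H.IsHermitian) (a : ℝ) (ha : 0 < a)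
    (adH : Matrix n n ℂ →L[ℂ] Matrix n n ℂ)
    (hadH : adH = LinearMap.toContinuousLinearMap
      (LinearMap.mulLeft ℂ H - LinearMap.mulRight ℂ H))
    (ρ : Matrix n n ℂ) :
    (∫ ξ : ℝ, NormedSpace.exp (((-Complex.I) * (ξ : ℂ)) • H) * ρ *
        NormedSpace.exp ((Complex.I * (ξ : ℂ)) • H)
      ∂(gaussianReal 0 (2 * a).toNNReal)) =
      NormedSpace.exp ((-(a : ℂ)) • (adH ∘L adH)) ρ := by
  set U := hH.eigenvectorUnitary
  set gap : n → n → ℝ := fun j k ↦ hH.eigenvalues k - hH.eigenvalues j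
  have hspec := hH.spectral_theorem
  have hintegrand (ξ : ℝ) : NormedSpace.exp ((-Complex.I * ξ) • H) * ρ *
      NormedSpace.exp ((Complex.I * ξ) • H) =
        conjHadamard U (fun j k ↦ Complex.exp (gap j k * ξ * Complex.I)) ρ := by
    rw [neg_mul, exp_neg_smul_mul_mul_exp_smul hspec]
    congr with j k
    simp only [gap, Function.comp_apply, Complex.coe_algebraMap, Complex.ofReal_sub]
    congr 1
    ring
  have hexponent : (-(a : ℂ)) • (adH ∘L adH) =
      conjHadamard U (fun j k ↦ -(((2 * a).toNNReal : ℝ) * gap j k ^ 2 / 2)) := by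
    rw [hadH, toContinuousLinearMap_mulLeft_sub_mulRight_eq_conjHadamard hspec,
      ← ContinuousLinearMap.mul_def, ← map_mul, ← map_smul, Real.coe_toNNReal _ (by positivity)]
    congr with j k
    simp only [gap, Function.comp_apply, Complex.coe_algebraMap, Pi.smul_apply, Pi.mul_apply,
      smul_eq_mul]
    push_cast
    ring
  simp_rw [hintegrand]
  rw [integral_conjHadamard_apply U (integrable_pi_cexp_mul_I gap),
    integral_pi_cexp_mul_I_gaussianReal, hexponent, exp_conjHadamard]

/-- Closed form of the single-channel Gaussian-averaging map
(Eq. SM app-Phi-ell-closed): averaging the conjugation `ρ ↦ e^{−iξH} ρ e^{iξH}` over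
`ξ ∼ N(0, 2a)` equals the exponential of the endomorphism `−a·ad_H²`, where
`ad_H(ρ) = Hρ − ρH`. -/
theorem gaussian_averaging_closed_form {n : Type*} [Fintype n] [DecidableEq n] [Nonempty n]
    (H : Matrix n n ℂ) (hH : H.IsHermitian) (a : ℝ) (ha : 0 < a)
    (adH : Matrix n n ℂ →L[ℂ] Matrix n n ℂ)
    (hadH : adH = LinearMap.toContinuousLinearMap
      (LinearMap.mulLeft ℂ H - LinearMap.mulRight ℂ H))
    (ρ : Matrix n n ℂ) :
    (∫ ξ : ℝ, NormedSpace.exp (((-Complex.I) * (ξ : ℂ)) • H) * ρ *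
        NormedSpace.exp ((Complex.I * (ξ : ℂ)) • H)
      ∂(gaussianReal 0 (2 * a).toNNReal)) =
      NormedSpace.exp ((-(a : ℂ)) • (adH ∘L adH)) ρ :=
  gaussian_averaging_closed_form_general H hH a ha adH hadH ρ
end

section
/- Let H and K be Hermitian n×n complex matrices and let s ∈ ℝ. Then ‖exp((−i·s)•H) * K * exp((i·s)•H) − K‖ ≤ |s|·‖[H, K]‖. -/
open scoped Matrix.Norms.L2Operator
open Matrix

/-!
With `x = i • H`, which is skew-adjoint, the curve `t ↦ e^{-t x} K e^{t x}` has derivative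
`e^{-t x} (K x - x K) e^{t x}`. The exponentials are unitary, so this derivative has norm
`‖K x - x K‖ = ‖H K - K H‖`, and the mean value inequality on `[0, s]` gives the bound.
-/

open NormedSpace Complex

section Derivative

variable {A : Type*} [NormedRing A] [NormedAlgebra ℂ A] [CompleteSpace A]

theorem hasDerivAt_exp_smul_neg_mul_mul_exp_smul (x k : A) (z : ℂ) :
    HasDerivAt (fun w : ℂ => exp (w • -x) * k * exp (w • x))
      (exp (z • -x) * (k * x - x * k) * exp (z • x)) z := by
  refine (((hasDerivAt_exp_smul_const (-x) z).mul_const k).mul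
    (hasDerivAt_exp_smul_const' x z)).congr_deriv ?_
  noncomm_ring

end Derivative

section CStarRing

variable {A : Type*} [NormedRing A] [NormedAlgebra ℂ A] [CompleteSpace A] [StarRing A]
  [CStarRing A] [StarModule ℂ A]

theorem exp_ofReal_smul_mem_unitary {x : A} (hx : x ∈ skewAdjoint A) (t : ℝ) :
    exp ((t : ℂ) • x) ∈ unitary A := by
  let +nondep : NormedAlgebra ℚ A := .restrictScalars ℚ ℂ A
  refine exp_mem_unitary_of_mem_skewAdjoint ?_
  rw [skewAdjoint.mem_iff, star_smul, Complex.star_def, conj_ofReal, skewAdjoint.mem_iff.mp hx,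
    smul_neg]

theorem norm_exp_smul_neg_mul_mul_exp_smul_sub_le {x : A} (hx : x ∈ skewAdjoint A) (k : A)
    (s : ℝ) : ‖exp ((s : ℂ) • -x) * k * exp ((s : ℂ) • x) - k‖ ≤ |s| * ‖k * x - x * k‖ := by
  have hderiv (t : ℝ) := by
    simpa only [ofRealCLM_apply, ofReal_one, one_smul] using
      (hasDerivAt_exp_smul_neg_mul_mul_exp_smul x k t).scomp t ofRealCLM.hasDerivAt
  have hbound (t : ℝ) : ‖exp ((t : ℂ) • -x) * (k * x - x * k) * exp ((t : ℂ) • x)‖ ≤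
      ‖k * x - x * k‖ := by
    rw [CStarRing.norm_mul_mem_unitary _ (exp_ofReal_smul_mem_unitary hx t),
      CStarRing.norm_mem_unitary_mul _ (exp_ofReal_smul_mem_unitary (neg_mem hx) t)]
  simpa [mul_comm] using convex_univ.norm_image_sub_le_of_norm_hasDerivWithin_le
    (fun t _ => (hderiv t).hasDerivWithinAt) (fun t _ => hbound t)
    (Set.mem_univ 0) (Set.mem_univ s)

end CStarRing

theorem conjugated_difference_bound_general {n : Type*} [Fintype n] [DecidableEq n]
    (H K : Matrix n n ℂ) (hH : H.IsHermitian) (s : ℝ) :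
    ‖NormedSpace.exp (((-Complex.I) * (s : ℂ)) • H) * K *
        NormedSpace.exp ((Complex.I * (s : ℂ)) • H) - K‖ ≤
      |s| * ‖H * K - K * H‖ := by
  have hx : I • H ∈ skewAdjoint (Matrix n n ℂ) :=
    hH.isSelfAdjoint.smul_mem_skewAdjoint (by simp [skewAdjoint.mem_iff])
  have hcomm : K * (I • H) - (I • H) * K = (-I) • (H * K - K * H) := by
    simp only [mul_smul_comm, smul_mul_assoc, smul_sub, neg_smul]; abel
  have hnorm : ‖K * (I • H) - (I • H) * K‖ = ‖H * K - K * H‖ := by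
    rw [hcomm, norm_smul]; simp
  have hleft : (-I * s) • H = (s : ℂ) • -(I • H) := by
    rw [smul_neg, smul_smul, neg_mul, neg_smul, mul_comm]
  have hright : (I * s) • H = (s : ℂ) • (I • H) := by
    rw [smul_smul, mul_comm]
  rw [← hnorm, hleft, hright]
  exact norm_exp_smul_neg_mul_mul_exp_smul_sub_le hx K s

/-- Bound on the conjugated-operator difference (from the integral representation
Eq. SM conj_minus_HIk): `‖e^{−isH} K e^{isH} − K‖ ≤ |s|·‖[H,K]‖`. -/
theorem conjugated_difference_bound {n : Type*} [Fintype n] [DecidableEq n] [Nonempty n]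
    (H K : Matrix n n ℂ) (hH : H.IsHermitian) (hK : K.IsHermitian) (s : ℝ) :
    ‖NormedSpace.exp (((-Complex.I) * (s : ℂ)) • H) * K *
        NormedSpace.exp ((Complex.I * (s : ℂ)) • H) - K‖ ≤
      |s| * ‖H * K - K * H‖ :=
  conjugated_difference_bound_general H K hH s
end
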